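/- For all 1 ≤ i, j ≤ n and all m, p ∈ ℤ: [ρ(F_i)_m, ρ(F_j)_p] = δ_{i,j+1} · (a_{j,j+1,m+p} + Σ_{q=j+2}^{n} Σ_{s∈ℤ} a_{jq,s} a*_{j+2,q,m+p−s}) − δ_{j,i+1} · (a_{i,i+1,m+p} + Σ_{q=i+2}^{n} Σ_{s∈ℤ} a_{iq,s} a*_{i+2,q,m+p−s}). In particular [ρ(F_i)_m, ρ(F_j)_p] = 0 whenever |i − j| ≠ 1. -/

import Mathlib

open MvPolynomial

/-- The Cartan matrix of `sl(n+1, ℂ)` in 1-based indices. -/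
noncomputable def cartanEntry (i j : ℕ) : ℂ :=
  if i = j then 2 else if i + 1 = j ∨ j + 1 = i then -1 else 0

/-- The entries of the matrix `𝔅` (1-based indices). -/
noncomputable def Bentry (r : ℕ) (γ : ℂ) (i j : ℕ) : ℂ :=
  cartanEntry i j *
    (γ ^ 2 - (if r < i then 1 else 0) * (if r < j then 1 else 0) * ((r : ℂ) + 1)
      + ((r : ℂ) / 2) * (if i = r + 1 then 1 else 0) * (if j = r + 1 then 1 else 0))

/-- Index set for the variables `x_{ij,m}`, `1 ≤ i ≤ j ≤ n`, `m ∈ ℤ`. -/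
abbrev XIdx (n : ℕ) : Type := {v : ℕ × ℕ // 1 ≤ v.1 ∧ v.1 ≤ v.2 ∧ v.2 ≤ n} × ℤ

/-- Index set for the variables `y_{k,m}`, `1 ≤ k ≤ n` (encoded by `Fin n`,
`k ↦ k + 1`) and `m ≥ 1`. -/
abbrev YIdx (n : ℕ) : Type := Fin n × {m : ℕ // 1 ≤ m}

/-- The Fock space `F = ℂ[x_{ij,m}; y_{k,m}]`. -/
abbrev FSp (n : ℕ) : Type := MvPolynomial (XIdx n ⊕ YIdx n) ℂ

/-- The operator `a_{ij,m}`: it is `∂/∂x_{ij,m}` if `m ≥ 0` and `j ≤ r`, and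
multiplication by `x_{ij,m}` otherwise (and junk `0` for invalid indices `i, j`,
which are never used).  Applied to any fixed polynomial, all the `∑ᶠ` sums
appearing below have finite support, so they compute the intended operators. -/
noncomputable def aop (n r i j : ℕ) (m : ℤ) : FSp n → FSp n :=
  if h : 1 ≤ i ∧ i ≤ j ∧ j ≤ n then
    (if 0 ≤ m ∧ j ≤ r then fun q => pderiv (Sum.inl (⟨(i, j), h⟩, m)) q
     else fun q => X (Sum.inl (⟨(i, j), h⟩, m)) * q)
  else 0

/-- The operator `a*_{ij,m}`: multiplication by `x_{ij,−m}` if `m ≤ 0` and `j ≤ r`,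
and `−∂/∂x_{ij,−m}` otherwise. -/
noncomputable def astarop (n r i j : ℕ) (m : ℤ) : FSp n → FSp n :=
  if h : 1 ≤ i ∧ i ≤ j ∧ j ≤ n then
    (if m ≤ 0 ∧ j ≤ r then fun q => X (Sum.inl (⟨(i, j), h⟩, -m)) * q
     else fun q => -pderiv (Sum.inl (⟨(i, j), h⟩, -m)) q)
  else 0

/-- The polynomial `e_i·𝐲_m = Σ_{k=1}^n (e_i)_k y_{k,m}`. -/
noncomputable def yPoly (n : ℕ) (e : ℕ → ℕ → ℂ) (i : ℕ) (m : {m : ℕ // 1 ≤ m}) :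
    FSp n :=
  ∑ k : Fin n, e i (k.1 + 1) • X (Sum.inr (k, m))

/-- The operator `b_{i,m}`:  `b_{i,0} = λ_i · id`; for `m > 0`, `b_{i,−m}` is
multiplication by `e_i·𝐲_m` and `b_{i,m} = m Σ_k (e_i)_k ∂/∂y_{k,m}`. -/
noncomputable def bop (n : ℕ) (e : ℕ → ℕ → ℂ) (lam : ℕ → ℂ) (i : ℕ) (m : ℤ) :
    FSp n → FSp n :=
  if h : 0 < m then
    fun q => (m : ℂ) • ∑ k : Fin n,
      e i (k.1 + 1) • pderiv (Sum.inr (k, ⟨m.toNat, by omega⟩)) q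
  else if h' : m = 0 then fun q => lam i • q
  else fun q => yPoly n e i ⟨(-m).toNat, by omega⟩ * q

/-- The normally ordered pair `:a_{ij,u} a*_{kl,v}:` : the annihilation operator
(`a_{ij,u}` with `u ≥ 0`, `j ≤ r`) is moved to the right of the creation operator. -/
noncomputable def nAA (n r i j k l : ℕ) (u v : ℤ) : FSp n → FSp n :=
  if 0 ≤ u ∧ j ≤ r then fun q => astarop n r k l v (aop n r i j u q)
  else fun q => aop n r i j u (astarop n r k l v q)

/-- Mode `m` (coefficient of `z^{−m−1}`) of the normally ordered product
`:a_{ij}(z) a*_{kl}(z):`. -/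
noncomputable def nAAmode (n r i j k l : ℕ) (m : ℤ) : FSp n → FSp n :=
  fun q => ∑ᶠ s : ℤ, nAA n r i j k l s (m - s) q

/-- Normal ordering of the mode `a*_{ij,s}` against an operator `B`: an
annihilating `a*_{ij,s}` (i.e. `s > 0` and `j ≤ r`, or `j > r`) is moved to the
right of `B`. -/
noncomputable def nStar (n r i j : ℕ) (s : ℤ) (B : FSp n → FSp n) : FSp n → FSp n :=
  if (j ≤ r ∧ 0 < s) ∨ r < j then fun q => B (astarop n r i j s q)
  else fun q => astarop n r i j s (B q)

/-- The intermediate Wakimoto mode operator `ρ(H_i)_m`. -/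
noncomputable def rhoH (n r : ℕ) (e : ℕ → ℕ → ℂ) (lam : ℕ → ℂ) (i : ℕ) (m : ℤ) :
    FSp n → FSp n :=
  fun q => (2 : ℂ) • nAAmode n r i i i i m q
    + ∑ j ∈ Finset.Ico 1 i,
        (nAAmode n r j i j i m q - nAAmode n r j (i - 1) j (i - 1) m q)
    + ∑ j ∈ Finset.Icc (i + 1) n,
        (nAAmode n r i j i j m q - nAAmode n r (i + 1) j (i + 1) j m q)
    + bop n e lam i m q

/-- The intermediate Wakimoto mode operator `ρ(F_i)_m`. -/
noncomputable def rhoF (n r i : ℕ) (m : ℤ) : FSp n → FSp n :=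
  fun q => aop n r i i m q
    + ∑ j ∈ Finset.Icc (i + 1) n,
        ∑ᶠ s : ℤ, aop n r i j s (astarop n r (i + 1) j (m - s) q)

/-- The intermediate Wakimoto mode operator `ρ(E_i)_m`. -/
noncomputable def rhoE (n r : ℕ) (γ : ℂ) (e : ℕ → ℕ → ℂ) (lam : ℕ → ℂ) (i : ℕ)
    (m : ℤ) : FSp n → FSp n :=
  fun q =>
    (∑ᶠ s : ℤ, nStar n r i i s
        ((∑ k ∈ Finset.Ico 1 i, nAAmode n r k (i - 1) k (i - 1) (m - s))
          - ∑ k ∈ Finset.Icc 1 i, nAAmode n r k i k i (m - s)) q)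
    + ∑ k ∈ Finset.Icc (i + 1) n,
        ∑ᶠ s : ℤ, aop n r (i + 1) k s (astarop n r i k (m - s) q)
    - ∑ k ∈ Finset.Ico 1 i,
        ∑ᶠ s : ℤ, aop n r k (i - 1) s (astarop n r k i (m - s) q)
    - ∑ᶠ s : ℤ, astarop n r i i s (bop n e lam i (m - s) q)
    - ((if r < i then (r : ℂ) + 1 else (i : ℂ) + 1) - γ ^ 2) •
        ((-(m : ℂ)) • astarop n r i i m q)

/-- Commutator of two operators. -/
noncomputable def opComm (n : ℕ) (A B : FSp n → FSp n) : FSp n → FSp n :=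
  fun q => A (B q) - B (A q)


/-!
The operators `a_{ij,m}` and `a*_{ij,m}` each act as `±∂/∂x` or as multiplication by `x` for a
single variable `x`, so they generate a Weyl algebra: the `a`'s commute, the `a*`'s commute, and
`[a_{ij,u}, a*_{kl,v}] = δ_{ik} δ_{jl} δ_{u+v,0}`. In a quadratic mode
`Σ_s a_{ik,s} a*_{i+d,k,c-s}` with `d > 0` the two factors act on different variables, so on each
polynomial only finitely many terms are nonzero and no normal ordering is needed. The Leibniz rule
for brackets, applied termwise, shows that the bracket of such a mode with an `a`, an `a*` or
another such mode is a single Kronecker delta times one operator of the same kind. Summing these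
over the terms of `ρ(F_i)` and `ρ(F_j)`, everything cancels unless `|i - j| = 1`.
-/

attribute [local instance] LieRing.ofAssociativeRing

section Weyl

variable {R σ : Type*} [CommRing R]

theorem MvPolynomial.pderiv_pderiv_comm (i j : σ) (p : MvPolynomial σ R) :
    pderiv i (pderiv j p) = pderiv j (pderiv i p) := by
  classical
  induction p using MvPolynomial.induction_on with
  | C a => simp
  | add p q hp hq => simp [hp, hq]
  | mul_X p k hp =>
    simp only [pderiv_mul, map_add, pderiv_X, hp, Pi.single_apply]
    split_ifs <;> simp only [mul_one, mul_zero, add_zero, map_zero, pderiv_one]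
    abel

theorem MvPolynomial.lie_pderiv_pderiv (i j : σ) :
    ⁅(pderiv (R := R) i).toLinearMap, (pderiv (R := R) j).toLinearMap⁆ = 0 :=
  LinearMap.ext fun p => by simp [Ring.lie_def, pderiv_pderiv_comm i j p]

theorem MvPolynomial.lie_pderiv_mulLeft_X [DecidableEq σ] (i j : σ) :
    ⁅(pderiv (R := R) i).toLinearMap, LinearMap.mulLeft R (X j : MvPolynomial σ R)⁆ =
      if j = i then 1 else 0 :=
  LinearMap.ext fun p => by split_ifs with h <;> simp [Ring.lie_def, h]

theorem MvPolynomial.lie_mulLeft_X_pderiv [DecidableEq σ] (i j : σ) :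
    ⁅LinearMap.mulLeft R (X j : MvPolynomial σ R), (pderiv (R := R) i).toLinearMap⁆ =
      -if j = i then 1 else 0 :=
  LinearMap.ext fun p => by split_ifs with h <;> simp [Ring.lie_def, h]

theorem MvPolynomial.lie_mulLeft_X_mulLeft_X (i j : σ) :
    ⁅LinearMap.mulLeft R (X i : MvPolynomial σ R),
      LinearMap.mulLeft R (X j : MvPolynomial σ R)⁆ = 0 :=
  LinearMap.ext fun p => by simp [Ring.lie_def, mul_left_comm]

end Weyl

theorem Module.End.lie_apply_eq_finsum {R M ι : Type*} [Semiring R] [AddCommGroup M]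
    [Module R M] (X Q : Module.End R M) (A B : ι → Module.End R M)
    (hQ : ∀ q, Q q = ∑ᶠ s, A s (B s q)) (hfin : ∀ q, (fun s => A s (B s q)).HasFiniteSupport)
    (q : M) : ⁅X, Q⁆ q = ∑ᶠ s, (⁅X, A s⁆ * B s + A s * ⁅X, B s⁆) q := by
  have hX : X (∑ᶠ s, A s (B s q)) = ∑ᶠ s, X (A s (B s q)) := map_finsum X (hfin q)
  rw [Ring.lie_def, LinearMap.sub_apply, Module.End.mul_apply, Module.End.mul_apply, hQ, hQ, hX,
    ← finsum_sub_distrib ((hfin q).fun_comp (map_zero X)) (hfin (X q))]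
  refine finsum_congr fun s => ?_
  simp only [Ring.lie_def, LinearMap.add_apply, Module.End.mul_apply, LinearMap.sub_apply,
    map_sub]
  abel

section WeylOperators

variable {n r : ℕ}

noncomputable def aEnd (n r i j : ℕ) (u : ℤ) : Module.End ℂ (FSp n) :=
  if h : 1 ≤ i ∧ i ≤ j ∧ j ≤ n then
    (if 0 ≤ u ∧ j ≤ r then (pderiv (Sum.inl (⟨(i, j), h⟩, u))).toLinearMap
     else LinearMap.mulLeft ℂ (X (Sum.inl (⟨(i, j), h⟩, u))))
  else 0

noncomputable def astarEnd (n r i j : ℕ) (u : ℤ) : Module.End ℂ (FSp n) :=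
  if h : 1 ≤ i ∧ i ≤ j ∧ j ≤ n then
    (if u ≤ 0 ∧ j ≤ r then LinearMap.mulLeft ℂ (X (Sum.inl (⟨(i, j), h⟩, -u)))
     else -(pderiv (Sum.inl (⟨(i, j), h⟩, -u))).toLinearMap)
  else 0

theorem coe_aEnd (i j : ℕ) (u : ℤ) : ⇑(aEnd n r i j u) = aop n r i j u := by
  unfold aEnd aop
  split_ifs <;> rfl

theorem coe_astarEnd (i j : ℕ) (u : ℤ) : ⇑(astarEnd n r i j u) = astarop n r i j u := by
  unfold astarEnd astarop
  split_ifs <;> rfl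

theorem lie_aEnd_aEnd (i j k l : ℕ) (u v : ℤ) : ⁅aEnd n r i j u, aEnd n r k l v⁆ = 0 := by
  unfold aEnd
  split_ifs <;> simp_all [lie_pderiv_pderiv, lie_pderiv_mulLeft_X, lie_mulLeft_X_pderiv,
    lie_mulLeft_X_mulLeft_X] <;> omega

theorem lie_astarEnd_astarEnd (i j k l : ℕ) (u v : ℤ) :
    ⁅astarEnd n r i j u, astarEnd n r k l v⁆ = 0 := by
  unfold astarEnd
  split_ifs <;> simp_all [lie_pderiv_pderiv, lie_pderiv_mulLeft_X, lie_mulLeft_X_pderiv,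
    lie_mulLeft_X_mulLeft_X] <;> omega

theorem lie_aEnd_astarEnd {i j : ℕ} (h : 1 ≤ i ∧ i ≤ j ∧ j ≤ n) (k l : ℕ) (u v : ℤ) :
    ⁅aEnd n r i j u, astarEnd n r k l v⁆ = if k = i ∧ l = j ∧ u + v = 0 then 1 else 0 := by
  unfold aEnd astarEnd
  split_ifs <;> simp_all [lie_pderiv_pderiv, lie_pderiv_mulLeft_X, lie_mulLeft_X_pderiv,
    lie_mulLeft_X_mulLeft_X] <;> omega

theorem hasFiniteSupport_aEnd_astarEnd {i i' : ℕ} (hii' : i ≠ i') (k : ℕ) (c : ℤ) (q : FSp n) :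
    (fun s => aEnd n r i k s (astarEnd n r i' k (c - s) q)).HasFiniteSupport := by
  by_cases h : (1 ≤ i ∧ i ≤ k ∧ k ≤ n) ∧ (1 ≤ i' ∧ i' ≤ k ∧ k ≤ n)
  swap
  · have hzero : (fun s => aEnd n r i k s (astarEnd n r i' k (c - s) q)) = 0 := by
      funext s
      unfold aEnd astarEnd
      rcases not_and_or.mp h with h | h <;> simp [h]
    simp [hzero, Function.HasFiniteSupport]
  obtain ⟨h1, h2⟩ := h
  let x : ℤ → XIdx n ⊕ YIdx n := fun s => Sum.inl (⟨(i, k), h1⟩, s)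
  let y : ℤ → XIdx n ⊕ YIdx n := fun s => Sum.inl (⟨(i', k), h2⟩, s - c)
  have hx : x.Injective := fun s t hst => by simpa [x] using hst
  have hy : y.Injective := fun s t hst => by simpa [y] using hst
  -- For `s ∉ [c, 0)` one of the two factors differentiates in `x s` or `y s`, and a term
  -- survives only if that variable occurs in `q`.
  refine (((Set.finite_Ico c 0).union (q.vars.finite_toSet.preimage hx.injOn)).union
    (q.vars.finite_toSet.preimage hy.injOn)).subset fun s hs => ?_
  contrapose! hs
  simp only [Set.mem_union, Set.mem_Ico, Set.mem_preimage, Finset.mem_coe, not_or] at hs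
  obtain ⟨⟨hsc, hxs⟩, hys⟩ := hs
  have hxy : x s ≠ y s := by simp [x, y, hii']
  simp only [x, y] at hxs hys hxy
  simp only [Function.mem_support, not_not]
  unfold aEnd astarEnd
  simp only [dif_pos h1, dif_pos h2, neg_sub]
  split_ifs
  · simp [pderiv_X_of_ne hxy.symm, pderiv_eq_zero_of_notMem_vars hxs]
  · simp [pderiv_eq_zero_of_notMem_vars hys]
  · exact absurd ⟨by omega, by omega⟩ hsc
  · simp [pderiv_eq_zero_of_notMem_vars hys]

end WeylOperators

section QuadraticModes

variable {n r : ℕ}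

/-- The mode `c` of `a_{ik}(z) a*_{i+d,k}(z)`. For `d = 0` the defining sum can have infinite
support (the product would need normal ordering), hence `0 < d`. -/
noncomputable def aAstarMode (n r i d k : ℕ) (c : ℤ) (hd : 0 < d) : Module.End ℂ (FSp n) where
  toFun q := ∑ᶠ s, aEnd n r i k s (astarEnd n r (i + d) k (c - s) q)
  map_add' q q' := by
    simp only [map_add]
    exact finsum_add_distrib (hasFiniteSupport_aEnd_astarEnd (by omega) k c q)
      (hasFiniteSupport_aEnd_astarEnd (by omega) k c q')
  map_smul' a q := by
    simp only [map_smul]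
    exact (smul_finsum' a (hasFiniteSupport_aEnd_astarEnd (by omega) k c q)).symm

theorem aAstarMode_apply (i d k : ℕ) (c : ℤ) (hd : 0 < d) (q : FSp n) :
    aAstarMode n r i d k c hd q = ∑ᶠ s, aEnd n r i k s (astarEnd n r (i + d) k (c - s) q) :=
  rfl

theorem lie_apply_aAstarMode (X : Module.End ℂ (FSp n)) (j e l : ℕ) (p : ℤ) (he : 0 < e)
    (q : FSp n) :
    ⁅X, aAstarMode n r j e l p he⁆ q =
      ∑ᶠ s, (⁅X, aEnd n r j l s⁆ * astarEnd n r (j + e) l (p - s) +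
        aEnd n r j l s * ⁅X, astarEnd n r (j + e) l (p - s)⁆) q :=
  X.lie_apply_eq_finsum _ _ _ (aAstarMode_apply j e l p he)
    (hasFiniteSupport_aEnd_astarEnd (by omega) l p) q

theorem lie_aEnd_aAstarMode {α β : ℕ} (hαβ : 1 ≤ α ∧ α ≤ β ∧ β ≤ n) (u : ℤ) (j e l : ℕ) (p : ℤ)
    (he : 0 < e) : ⁅aEnd n r α β u, aAstarMode n r j e l p he⁆ =
      if j + e = α ∧ l = β then aEnd n r j l (u + p) else 0 := by
  refine LinearMap.ext fun q => ?_
  rw [lie_apply_aAstarMode, finsum_eq_single _ (u + p)]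
  · simp [lie_aEnd_aEnd, lie_aEnd_astarEnd hαβ]
  · intro s hs
    rw [lie_aEnd_aEnd, lie_aEnd_astarEnd hαβ, if_neg (by omega)]
    simp

theorem lie_astarEnd_aAstarMode (α β : ℕ) (u : ℤ) {j l : ℕ} (hjl : 1 ≤ j ∧ j ≤ l ∧ l ≤ n)
    (e : ℕ) (p : ℤ) (he : 0 < e) : ⁅astarEnd n r α β u, aAstarMode n r j e l p he⁆ =
      -if α = j ∧ β = l then astarEnd n r (j + e) l (p + u) else 0 := by
  refine LinearMap.ext fun q => ?_
  rw [lie_apply_aAstarMode, finsum_eq_single _ (-u)]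
  · rw [← lie_skew, lie_aEnd_astarEnd hjl, lie_astarEnd_astarEnd]
    by_cases h : α = j ∧ β = l <;> simp [h]
  · intro s hs
    rw [← lie_skew, lie_aEnd_astarEnd hjl, lie_astarEnd_astarEnd, if_neg (by omega)]
    simp

theorem lie_aAstarMode_aAstarMode {i d k j e l : ℕ} (hik : 1 ≤ i ∧ i + d ≤ k ∧ k ≤ n)
    (hjl : 1 ≤ j ∧ j + e ≤ l ∧ l ≤ n) (m p : ℤ) (hd : 0 < d) (he : 0 < e) :
    ⁅aAstarMode n r i d k m hd, aAstarMode n r j e l p he⁆ =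
      (if j + e = i ∧ l = k then aAstarMode n r j (e + d) l (m + p) (by omega) else 0) -
        if i + d = j ∧ k = l then aAstarMode n r i (d + e) k (m + p) (by omega) else 0 := by
  have hA : ∀ s, ⁅aAstarMode n r i d k m hd, aEnd n r j l s⁆ =
      -if i + d = j ∧ k = l then aEnd n r i k (s + m) else 0 := fun s => by
    rw [← lie_skew, lie_aEnd_aAstarMode ⟨hjl.1, by omega, hjl.2.2⟩]
  have hB : ∀ t, ⁅aAstarMode n r i d k m hd, astarEnd n r (j + e) l t⁆ =
      if j + e = i ∧ l = k then astarEnd n r (i + d) k (m + t) else 0 := fun t => by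
    rw [← lie_skew, lie_astarEnd_aAstarMode _ _ _ ⟨hik.1, by omega, hik.2.2⟩, neg_neg]
  refine LinearMap.ext fun q => ?_
  rw [lie_apply_aAstarMode]
  -- Since `d, e > 0`, at most one of the two deltas is nonzero.
  by_cases c1 : i + d = j ∧ k = l
  · obtain ⟨rfl, rfl⟩ := c1
    have hne : i + d + e ≠ i := by omega
    simp only [hA, hB, and_true, if_true, hne, if_false, mul_zero, add_zero,
      LinearMap.neg_apply, Module.End.mul_apply, zero_sub, finsum_neg_distrib, aAstarMode_apply]
    conv_rhs => rw [← finsum_comp_equiv (Equiv.addRight m)]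
    refine congrArg _ (finsum_congr fun s => ?_)
    rw [Equiv.coe_addRight, add_comm m p, add_sub_add_right_eq_sub, add_assoc]
  by_cases c2 : j + e = i ∧ l = k
  · obtain ⟨rfl, rfl⟩ := c2
    have hne : j + e + d ≠ j := by omega
    simp only [hA, hB, and_true, if_true, hne, if_false, neg_zero, zero_mul, zero_add, sub_zero,
      Module.End.mul_apply, aAstarMode_apply]
    refine finsum_congr fun s => ?_
    rw [add_assoc, add_sub_assoc]
  · simp [hA, hB, c1, c2]

end QuadraticModes

section LoweringOperators

variable {n r : ℕ}

noncomputable def fEnd (n r i : ℕ) (m : ℤ) : Module.End ℂ (FSp n) :=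
  aEnd n r i i m + ∑ k ∈ Finset.Icc (i + 1) n, aAstarMode n r i 1 k m one_pos

noncomputable def fEnd₂ (n r i : ℕ) (m : ℤ) : Module.End ℂ (FSp n) :=
  aEnd n r i (i + 1) m + ∑ k ∈ Finset.Icc (i + 2) n, aAstarMode n r i 2 k m two_pos

theorem coe_fEnd (i : ℕ) (m : ℤ) : ⇑(fEnd n r i m) = rhoF n r i m := by
  funext q
  simp [fEnd, rhoF, aAstarMode_apply, coe_aEnd, coe_astarEnd]

theorem lie_aEnd_sum_aAstarMode {i : ℕ} (hi : 1 ≤ i) (hi' : i ≤ n) (m : ℤ) (j : ℕ) (p : ℤ) :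
    ⁅aEnd n r i i m, ∑ l ∈ Finset.Icc (j + 1) n, aAstarMode n r j 1 l p one_pos⁆ =
      if i = j + 1 then aEnd n r j (j + 1) (m + p) else 0 := by
  rw [lie_sum]
  simp only [lie_aEnd_aAstarMode ⟨hi, le_rfl, hi'⟩]
  split_ifs with h
  · subst h
    simp [Finset.sum_ite_eq', hi']
  · exact Finset.sum_eq_zero fun l _ => if_neg (by omega)

theorem lie_sum_aAstarMode_sum_aAstarMode {i j : ℕ} (hi : 1 ≤ i) (hj : 1 ≤ j) (m p : ℤ) :
    ⁅∑ k ∈ Finset.Icc (i + 1) n, aAstarMode n r i 1 k m one_pos,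
        ∑ l ∈ Finset.Icc (j + 1) n, aAstarMode n r j 1 l p one_pos⁆ =
      (if i = j + 1 then ∑ k ∈ Finset.Icc (j + 2) n, aAstarMode n r j 2 k (m + p) two_pos
        else 0) -
        if j = i + 1 then ∑ k ∈ Finset.Icc (i + 2) n, aAstarMode n r i 2 k (m + p) two_pos
        else 0 := by
  rw [sum_lie]
  simp_rw [lie_sum]
  rw [Finset.sum_congr rfl fun k hk => Finset.sum_congr rfl fun l hl =>
    lie_aAstarMode_aAstarMode (r := r) ⟨hi, (Finset.mem_Icc.mp hk).1, (Finset.mem_Icc.mp hk).2⟩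
      ⟨hj, (Finset.mem_Icc.mp hl).1, (Finset.mem_Icc.mp hl).2⟩ m p one_pos one_pos]
  simp only [Finset.sum_sub_distrib]
  by_cases h : i = j + 1
  · subst h
    have : j + 1 + 1 ≠ j := by omega
    simp only [true_and, this, false_and, if_false, if_true, Finset.sum_const_zero, sub_zero,
      Finset.sum_ite_eq', Ne.symm this, add_assoc, Nat.reduceAdd]
    rw [Finset.sum_ite_mem, Finset.inter_eq_left.mpr (Finset.Icc_subset_Icc (by omega) le_rfl)]
  by_cases h' : j = i + 1
  · subst h'
    have : i + 1 + 1 ≠ i := by omega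
    simp only [true_and, this, false_and, if_false, if_true, Finset.sum_const_zero, zero_sub,
      Finset.sum_ite_eq, h, add_assoc, Nat.reduceAdd]
    rw [Finset.sum_ite_mem, Finset.inter_eq_right.mpr (Finset.Icc_subset_Icc (by omega) le_rfl)]
  · simp only [show j + 1 ≠ i by omega, show i + 1 ≠ j by omega, h, h', false_and, if_false,
      Finset.sum_const_zero, sub_zero]

theorem lie_fEnd_fEnd {i j : ℕ} (hi : 1 ≤ i) (hi' : i ≤ n) (hj : 1 ≤ j) (hj' : j ≤ n)
    (m p : ℤ) :
    ⁅fEnd n r i m, fEnd n r j p⁆ =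
      (if i = j + 1 then fEnd₂ n r j (m + p) else 0) -
        if j = i + 1 then fEnd₂ n r i (m + p) else 0 := by
  unfold fEnd fEnd₂
  rw [add_lie, lie_add, lie_add, lie_aEnd_aEnd, zero_add, lie_aEnd_sum_aAstarMode hi hi',
    ← lie_skew, lie_aEnd_sum_aAstarMode hj hj', lie_sum_aAstarMode_sum_aAstarMode hi hj,
    add_comm p m]
  split_ifs <;> first | omega | abel

end LoweringOperators

theorem wakimoto_FF_commutator_general (n r : ℕ)
    (i j : ℕ) (hi : 1 ≤ i) (hi' : i ≤ n) (hj : 1 ≤ j) (hj' : j ≤ n) (m p : ℤ) :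
    (opComm n (rhoF n r i m) (rhoF n r j p) = fun w =>
      (if i = j + 1 then (1 : ℂ) else 0) •
        (aop n r j (j + 1) (m + p) w +
          ∑ q ∈ Finset.Icc (j + 2) n,
            ∑ᶠ s : ℤ, aop n r j q s (astarop n r (j + 2) q (m + p - s) w))
      - (if j = i + 1 then (1 : ℂ) else 0) •
        (aop n r i (i + 1) (m + p) w +
          ∑ q ∈ Finset.Icc (i + 2) n,
            ∑ᶠ s : ℤ, aop n r i q s (astarop n r (i + 2) q (m + p - s) w))) ∧
    (¬(i = j + 1 ∨ j = i + 1) → opComm n (rhoF n r i m) (rhoF n r j p) = 0) := by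
  have hcomm : opComm n (rhoF n r i m) (rhoF n r j p) = ⇑⁅fEnd n r i m, fEnd n r j p⁆ := by
    rw [← coe_fEnd, ← coe_fEnd]
    rfl
  rw [hcomm, lie_fEnd_fEnd hi hi' hj hj']
  refine ⟨funext fun w => ?_, fun h => ?_⟩
  · split_ifs <;> simp [fEnd₂, aAstarMode_apply, coe_aEnd, coe_astarEnd]
  · simp [not_or.mp h]

/-- the explicit commutator of the lowering operators:
`[ρ(F_i)_m, ρ(F_j)_p] = δ_{i,j+1}(a_{j,j+1,m+p} + Σ_{q=j+2}^n Σ_s a_{jq,s}a*_{j+2,q,m+p−s})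
 − δ_{j,i+1}(a_{i,i+1,m+p} + Σ_{q=i+2}^n Σ_s a_{iq,s}a*_{i+2,q,m+p−s})`;
in particular it vanishes when `|i − j| ≠ 1`. -/
theorem wakimoto_FF_commutator (n r : ℕ) (γ : ℂ) (e : ℕ → ℕ → ℂ) (lam : ℕ → ℂ)
    (hn : 1 ≤ n) (hr : r ≤ n)
    (he : ∀ i j, 1 ≤ i → i ≤ n → 1 ≤ j → j ≤ n →
      (∑ k : Fin n, e i (k.1 + 1) * e j (k.1 + 1)) = Bentry r γ i j)
    (i j : ℕ) (hi : 1 ≤ i) (hi' : i ≤ n) (hj : 1 ≤ j) (hj' : j ≤ n) (m p : ℤ) :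
    (opComm n (rhoF n r i m) (rhoF n r j p) = fun w =>
      (if i = j + 1 then (1 : ℂ) else 0) •
        (aop n r j (j + 1) (m + p) w +
          ∑ q ∈ Finset.Icc (j + 2) n,
            ∑ᶠ s : ℤ, aop n r j q s (astarop n r (j + 2) q (m + p - s) w))
      - (if j = i + 1 then (1 : ℂ) else 0) •
        (aop n r i (i + 1) (m + p) w +
          ∑ q ∈ Finset.Icc (i + 2) n,
            ∑ᶠ s : ℤ, aop n r i q s (astarop n r (i + 2) q (m + p - s) w))) ∧
    (¬(i = j + 1 ∨ j = i + 1) → opComm n (rhoF n r i m) (rhoF n r j p) = 0) :=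
  wakimoto_FF_commutator_general n r i j hi hi' hj hj' m p
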